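/- arXiv:2307.02619 — 2 statements merged into one kernel-verified Lean document; each statement's English description precedes it below -/
import Mathlib

section
/- Let n ≥ 1, let 0 ≤ i,j ≤ n−1, and set L := ⌊(n−1−i)/q⌋ + ⌊(n−1−j)/p⌋ + 1. Then for every integer 0 ≤ ℓ ≤ L one has D_{[ℓ,i,j,n]} = D_{[ℓ,i,j]}, and hence A_{[ℓ,i,j,n]} = A_{[ℓ,i,j]}. Consequently A_{i,j}(z) − R_{i,j,n}(z) = O(z^{−L−2}) as z → ∞; that is, the coefficients of z^{−ℓ−1} in A_{i,j}(z) and in R_{i,j,n}(z) agree for all 0 ≤ ℓ ≤ L. -/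
open scoped BigOperators
open Finset

noncomputable section

/-- The field `ℂ((z⁻¹))`, realized as Laurent series in the variable `t = z⁻¹`. -/
abbrev LS : Type := LaurentSeries ℂ

/-- The element `z` of `ℂ((z⁻¹))` (i.e. `t⁻¹`). -/
def zLS : LS := HahnSeries.single (-1 : ℤ) (1 : ℂ)

/-- Constant (scalar) Laurent series. -/
def CLS (c : ℂ) : LS := HahnSeries.C c

/-- The generating series `Σ_{n ≥ 0} c n · z^{-n-1}` in `ℂ((z⁻¹))`. -/
def gen (c : ℕ → ℂ) : LS :=
  HahnSeries.single (1 : ℤ) (1 : ℂ) * (HahnSeries.ofPowerSeries ℤ ℂ) (PowerSeries.mk c)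

/-- Weight of a step of displacement `s` starting at height `h`:
`a_h^{(s)}` if `s ≥ 0`, and `a_{h+s}^{(s)}` if `s < 0`.  (Here `a k n = aₙ⁽ᵏ⁾`.) -/
def stepW (a : ℤ → ℤ → ℂ) (h s : ℤ) : ℂ := if 0 ≤ s then a s h else a s (h + s)

/-- Extend a finite step sequence by zero. -/
def ext {n : ℕ} (s : Fin n → ℤ) : ℕ → ℤ := fun t => if h : t < n then s ⟨t, h⟩ else 0

/-- Height after `k` steps, starting at height `i`. -/
def hgt (i : ℤ) (σ : ℕ → ℤ) (k : ℕ) : ℤ := i + ∑ t ∈ Finset.range k, σ t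

/-- Weight of the lattice path of length `n` starting at height `i` with steps `σ`. -/
def wgt (a : ℤ → ℤ → ℂ) (n : ℕ) (i : ℤ) (σ : ℕ → ℤ) : ℂ :=
  ∏ k ∈ Finset.range n, stepW a (hgt i σ k) (σ k)

/-- All admissible step sequences of length `n` (each step in `[-p, q]`). -/
def steps (p q n : ℕ) : Finset (Fin n → ℤ) :=
  Fintype.piFinset fun _ => Finset.Icc (-(p : ℤ)) (q : ℤ)

/-- `A_{[n,i,j]}`: weight polynomial of paths of length `n` from `(0,i)` to `(n,j)`
staying at height `≥ 0`. -/
def Apoly (p q : ℕ) (a : ℤ → ℤ → ℂ) (n : ℕ) (i j : ℤ) : ℂ :=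
  ∑ s ∈ steps p q n,
    if hgt i (ext s) n = j ∧ ∀ k ≤ n, 0 ≤ hgt i (ext s) k then wgt a n i (ext s) else 0

/-- `W_{[n,i,j]}`: weight polynomial of unrestricted paths of length `n` from `(0,i)` to `(n,j)`. -/
def Wpoly (p q : ℕ) (a : ℤ → ℤ → ℂ) (n : ℕ) (i j : ℤ) : ℂ :=
  ∑ s ∈ steps p q n, if hgt i (ext s) n = j then wgt a n i (ext s) else 0

/-- `V_{[n,i,j]}`: weight polynomial of paths of length `n` from `(0,i)` to `(n,j)`
staying at height `≤ -1`. -/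
def Vpoly (p q : ℕ) (a : ℤ → ℤ → ℂ) (n : ℕ) (i j : ℤ) : ℂ :=
  ∑ s ∈ steps p q n,
    if hgt i (ext s) n = j ∧ ∀ k ≤ n, hgt i (ext s) k ≤ -1 then wgt a n i (ext s) else 0

/-- `A_{[ℓ,i,j,N]}`: weight polynomial of paths of length `ℓ` from `(0,i)` to `(ℓ,j)`
with all heights in `{0, …, N-1}`. -/
def Aboxpoly (p q : ℕ) (a : ℤ → ℤ → ℂ) (N ℓ : ℕ) (i j : ℤ) : ℂ :=
  ∑ s ∈ steps p q ℓ,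
    if hgt i (ext s) ℓ = j ∧ ∀ k ≤ ℓ, 0 ≤ hgt i (ext s) k ∧ hgt i (ext s) k ≤ (N : ℤ) - 1
    then wgt a ℓ i (ext s) else 0

/-- The generating series `A_{i,j}(z)`. -/
def Aser (p q : ℕ) (a : ℤ → ℤ → ℂ) (i j : ℤ) : LS := gen fun n => Apoly p q a n i j

/-- The generating series `W_{i,j}(z)`. -/
def Wser (p q : ℕ) (a : ℤ → ℤ → ℂ) (i j : ℤ) : LS := gen fun n => Wpoly p q a n i j

/-- The generating series `V_{i,j}(z)`. -/
def Vser (p q : ℕ) (a : ℤ → ℤ → ℂ) (i j : ℤ) : LS := gen fun n => Vpoly p q a n i j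


/-- The principal `n × n` truncation `H_n` of the banded matrix `H`. -/
def Hnmat (p q : ℕ) (a : ℤ → ℤ → ℂ) (n : ℕ) : Matrix (Fin n) (Fin n) ℂ := fun i j =>
  if -(p : ℤ) ≤ ((j : ℕ) : ℤ) - ((i : ℕ) : ℤ) ∧ ((j : ℕ) : ℤ) - ((i : ℕ) : ℤ) ≤ (q : ℤ) then
    a (((j : ℕ) : ℤ) - ((i : ℕ) : ℤ)) (min ((i : ℕ) : ℤ) ((j : ℕ) : ℤ)) else 0

/-- The collection `D_{[ℓ,i,j]}` of paths (given by their step sequences) of length `ℓ` from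
`(0,i)` to `(ℓ,j)` staying at height `≥ 0`. -/
def Dset (p q ℓ : ℕ) (i j : ℤ) : Finset (Fin ℓ → ℤ) :=
  (steps p q ℓ).filter fun s => hgt i (ext s) ℓ = j ∧ ∀ k ≤ ℓ, 0 ≤ hgt i (ext s) k

/-- The collection `D_{[ℓ,i,j,N]}` of paths of length `ℓ` from `(0,i)` to `(ℓ,j)` with all
heights in `{0, …, N-1}`. -/
def DboxSet (p q N ℓ : ℕ) (i j : ℤ) : Finset (Fin ℓ → ℤ) :=
  (steps p q ℓ).filter fun s =>
    hgt i (ext s) ℓ = j ∧ ∀ k ≤ ℓ, 0 ≤ hgt i (ext s) k ∧ hgt i (ext s) k ≤ (N : ℤ) - 1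

/-!
A path of length `ℓ` from height `i` to height `j` that touches height `≥ n` must climb from `i`
to `n` with steps of size at most `q`, which takes more than `⌊(n-1-i)/q⌋` steps, and then come
back down to `j` with steps of size at most `p`, which takes more than `⌊(n-1-j)/p⌋` steps. So for
`ℓ ≤ L` every path of `D_{[ℓ,i,j]}` stays in `{0, …, n-1}`. On the other side, expanding
`(H_n^ℓ)_{i,j}` as a sum over sequences of indices shows it is the weight of the paths confined to
`{0, …, n-1}`: the entry `a_{min(i,k)}^{(k-i)}` of `H_n` is exactly the weight of the step `i → k`.
-/

section Paths

variable {p q : ℕ} {a : ℤ → ℤ → ℂ}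

lemma ext_cons_zero {ℓ : ℕ} (x : ℤ) (s : Fin ℓ → ℤ) : ext (Fin.cons x s) 0 = x := by
  rw [_root_.ext, dif_pos ℓ.succ_pos]
  exact Fin.cons_zero (α := fun _ => ℤ) x s

lemma ext_cons_succ {ℓ : ℕ} (x : ℤ) (s : Fin ℓ → ℤ) (t : ℕ) :
    ext (Fin.cons x s) (t + 1) = ext s t := by
  by_cases h : t < ℓ
  · rw [_root_.ext, _root_.ext, dif_pos (by omega), dif_pos h]
    exact Fin.cons_succ (α := fun _ => ℤ) x s ⟨t, h⟩
  · rw [_root_.ext, _root_.ext, dif_neg (by omega), dif_neg h]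

lemma ext_mem_Icc {ℓ : ℕ} {s : Fin ℓ → ℤ} (hs : s ∈ steps p q ℓ) {t : ℕ} (ht : t < ℓ) :
    ext s t ∈ Icc (-(p : ℤ)) q := by
  rw [_root_.ext, dif_pos ht]
  exact Fintype.mem_piFinset.1 hs _

lemma hgt_zero (i : ℤ) (σ : ℕ → ℤ) : hgt i σ 0 = i := by simp [hgt]

lemma hgt_cons {ℓ : ℕ} (i x : ℤ) (s : Fin ℓ → ℤ) (k : ℕ) :
    hgt i (ext (Fin.cons x s)) (k + 1) = hgt (i + x) (ext s) k := by
  simp only [hgt, sum_range_succ', ext_cons_succ, ext_cons_zero]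
  ring

lemma wgt_cons {ℓ : ℕ} (i x : ℤ) (s : Fin ℓ → ℤ) :
    wgt a (ℓ + 1) i (ext (Fin.cons x s)) = stepW a i x * wgt a ℓ (i + x) (ext s) := by
  simp only [wgt, prod_range_succ', hgt_zero, ext_cons_zero, hgt_cons, ext_cons_succ]
  exact mul_comm _ _

lemma steps_succ (ℓ : ℕ) : steps p q (ℓ + 1) =
    (Icc (-(p : ℤ)) q ×ˢ steps p q ℓ).map (Fin.consEquiv fun _ => ℤ).toEmbedding := by
  ext s
  simp [steps, mem_map_equiv, Fin.forall_fin_succ, Fin.tail]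

lemma sum_steps_succ {M : Type*} [AddCommMonoid M] (ℓ : ℕ) (f : (Fin (ℓ + 1) → ℤ) → M) :
    ∑ s ∈ steps p q (ℓ + 1), f s = ∑ x ∈ Icc (-(p : ℤ)) q, ∑ s ∈ steps p q ℓ, f (Fin.cons x s) := by
  rw [steps_succ, sum_map, sum_product]
  rfl

lemma hgt_sub_hgt (i : ℤ) (σ : ℕ → ℤ) {k k' : ℕ} (hk : k ≤ k') :
    hgt i σ k' - hgt i σ k = ∑ t ∈ Ico k k', σ t := by
  rw [hgt, hgt, sum_Ico_eq_sub _ hk]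
  ring

lemma hgt_sub_hgt_le {ℓ : ℕ} {s : Fin ℓ → ℤ} (hs : s ∈ steps p q ℓ) (i : ℤ) {k k' : ℕ}
    (hk : k ≤ k') (hk' : k' ≤ ℓ) : hgt i (ext s) k' - hgt i (ext s) k ≤ q * (k' - k : ℕ) := by
  rw [hgt_sub_hgt i _ hk]
  calc ∑ t ∈ Ico k k', ext s t ≤ ∑ t ∈ Ico k k', (q : ℤ) :=
        sum_le_sum fun t ht => (mem_Icc.1 (ext_mem_Icc hs ((mem_Ico.1 ht).2.trans_le hk'))).2
    _ = q * (k' - k : ℕ) := by simp [mul_comm]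

lemma neg_mul_le_hgt_sub_hgt {ℓ : ℕ} {s : Fin ℓ → ℤ} (hs : s ∈ steps p q ℓ) (i : ℤ) {k k' : ℕ}
    (hk : k ≤ k') (hk' : k' ≤ ℓ) :
    -(p * (k' - k : ℕ) : ℤ) ≤ hgt i (ext s) k' - hgt i (ext s) k := by
  rw [hgt_sub_hgt i _ hk]
  calc -(p * (k' - k : ℕ) : ℤ) = ∑ t ∈ Ico k k', (-(p : ℤ)) := by simp [mul_comm]
    _ ≤ ∑ t ∈ Ico k k', ext s t :=
        sum_le_sum fun t ht => (mem_Icc.1 (ext_mem_Icc hs ((mem_Ico.1 ht).2.trans_le hk'))).1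

end Paths

section TransferMatrix

variable {p q : ℕ} {a : ℤ → ℤ → ℂ}

lemma Aboxpoly_zero (N : ℕ) (i j : ℤ) :
    Aboxpoly p q a N 0 i j = if i = j ∧ 0 ≤ i ∧ i ≤ (N : ℤ) - 1 then 1 else 0 := by
  simp [Aboxpoly, steps, wgt, hgt]

lemma forall_le_succ_iff {P : ℕ → Prop} {ℓ : ℕ} :
    (∀ k ≤ ℓ + 1, P k) ↔ P 0 ∧ ∀ k ≤ ℓ, P (k + 1) :=
  ⟨fun h => ⟨h 0 ℓ.succ.zero_le, fun k hk => h (k + 1) (by omega)⟩,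
    fun ⟨h0, h⟩ k hk => k.casesOn (motive := fun k => k ≤ ℓ + 1 → P k) (fun _ => h0)
      (fun k hk => h k (by omega)) hk⟩

lemma Aboxpoly_succ (N ℓ : ℕ) (i j : ℤ) :
    Aboxpoly p q a N (ℓ + 1) i j =
      if 0 ≤ i ∧ i ≤ (N : ℤ) - 1 then
        ∑ x ∈ Icc (-(p : ℤ)) q, stepW a i x * Aboxpoly p q a N ℓ (i + x) j
      else 0 := by
  simp only [Aboxpoly, sum_steps_succ, hgt_cons, wgt_cons, forall_le_succ_iff, hgt_zero,
    mul_sum, mul_ite, mul_zero]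
  split_ifs with hi
  · simp only [hi, true_and]
  · exact sum_eq_zero fun x _ => sum_eq_zero fun s _ => if_neg (by tauto)

lemma Aboxpoly_eq_zero_of_not_mem_box {N ℓ : ℕ} {i : ℤ} (h : ¬(0 ≤ i ∧ i ≤ (N : ℤ) - 1))
    (j : ℤ) : Aboxpoly p q a N ℓ i j = 0 := by
  cases ℓ with
  | zero => rw [Aboxpoly_zero, if_neg (by tauto)]
  | succ ℓ => rw [Aboxpoly_succ, if_neg h]

lemma stepW_sub (i m : ℤ) : stepW a i (m - i) = a (m - i) (min i m) := by
  rw [stepW]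
  split_ifs with h
  · rw [min_eq_left (by omega)]
  · rw [min_eq_right (by omega), add_sub_cancel]

lemma Hnmat_apply (N : ℕ) (i k : Fin N) :
    Hnmat p q a N i k =
      if -(p : ℤ) ≤ (k : ℤ) - i ∧ (k : ℤ) - i ≤ q then stepW a i ((k : ℤ) - i) else 0 := by
  rw [Hnmat, stepW_sub]

lemma sum_fin_eq_finsum {M : Type*} [AddCommMonoid M] {N : ℕ} {G : ℤ → M}
    (hG : ∀ m, G m ≠ 0 → 0 ≤ m ∧ m < N) : ∑ k : Fin N, G k = ∑ᶠ m, G m := by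
  let castFin : Fin N ↪ ℤ := ⟨fun k => (k : ℕ), fun k k' h => Fin.ext (by simpa using h)⟩
  rw [finsum_eq_sum_of_support_subset G (s := univ.map castFin), sum_map]
  · rfl
  intro m hm
  obtain ⟨h0, hN⟩ := hG m hm
  simp only [coe_map, coe_univ, Set.image_univ, Set.mem_range]
  exact ⟨⟨m.toNat, by omega⟩, Int.toNat_of_nonneg h0⟩

lemma Hnmat_pow_apply (N ℓ : ℕ) (i j : Fin N) :
    (Hnmat p q a N ^ ℓ) i j = Aboxpoly p q a N ℓ i j := by
  induction ℓ generalizing i with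
  | zero =>
    rw [pow_zero, Matrix.one_apply, Aboxpoly_zero]
    simp [Fin.ext_iff]
  | succ ℓ ih =>
    rw [pow_succ', Matrix.mul_apply, Aboxpoly_succ, if_pos (by omega)]
    simp_rw [Hnmat_apply, ih]
    set G : ℤ → ℂ := fun m =>
      (if -(p : ℤ) ≤ m - i ∧ m - i ≤ q then stepW a i (m - i) else 0) * Aboxpoly p q a N ℓ m j
    have hG_box : ∀ m, G m ≠ 0 → 0 ≤ m ∧ m < N := by
      intro m hm
      by_contra hout
      apply hm
      simp only [G]
      rw [Aboxpoly_eq_zero_of_not_mem_box (by omega), mul_zero]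
    have hG_shift : ∀ x, G (i + x) =
        if -(p : ℤ) ≤ x ∧ x ≤ q then stepW a i x * Aboxpoly p q a N ℓ (i + x) j else 0 := by
      intro x
      simp only [G, add_sub_cancel_left, ite_mul, zero_mul]
    rw [sum_fin_eq_finsum hG_box, ← finsum_comp_equiv (Equiv.addLeft (i : ℤ)),
      finsum_eq_sum_of_support_subset (s := Icc (-(p : ℤ)) q)]
    · exact sum_congr rfl fun x hx => by
        rw [Equiv.coe_addLeft, hG_shift, if_pos (mem_Icc.1 hx)]
    · intro x hx
      rw [Function.mem_support, Equiv.coe_addLeft, hG_shift] at hx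
      by_contra hout
      exact hx (if_neg (by simpa using hout))

end TransferMatrix

section Confinement

variable {p q : ℕ}

lemma hgt_le_of_length_le {n i j ℓ : ℕ} (hi : i < n) (hj : j < n)
    (hℓ : ℓ ≤ (n - 1 - i) / q + (n - 1 - j) / p + 1) {s : Fin ℓ → ℤ} (hs : s ∈ steps p q ℓ)
    (hend : hgt i (ext s) ℓ = j) {k : ℕ} (hk : k ≤ ℓ) : hgt i (ext s) k ≤ n - 1 := by
  by_contra! hhigh
  have hup := hgt_sub_hgt_le hs i k.zero_le hk
  have hdown := neg_mul_le_hgt_sub_hgt hs i hk le_rfl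
  rw [hgt_zero, Nat.sub_zero] at hup
  rw [hend] at hdown
  have hclimb : (n - 1 - i) / q < k := Nat.div_lt_of_lt_mul (by omega)
  have hdescent : (n - 1 - j) / p < ℓ - k := Nat.div_lt_of_lt_mul (by omega)
  omega

lemma box_iff_nonneg {n i j ℓ : ℕ} (hi : i < n) (hj : j < n)
    (hℓ : ℓ ≤ (n - 1 - i) / q + (n - 1 - j) / p + 1) {s : Fin ℓ → ℤ} (hs : s ∈ steps p q ℓ) :
    (hgt i (ext s) ℓ = j ∧ ∀ k ≤ ℓ, 0 ≤ hgt i (ext s) k ∧ hgt i (ext s) k ≤ (n : ℤ) - 1) ↔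
      (hgt i (ext s) ℓ = j ∧ ∀ k ≤ ℓ, 0 ≤ hgt i (ext s) k) :=
  ⟨fun ⟨hend, hbox⟩ => ⟨hend, fun k hk => (hbox k hk).1⟩,
    fun ⟨hend, hnonneg⟩ =>
      ⟨hend, fun k hk => ⟨hnonneg k hk, hgt_le_of_length_le hi hj hℓ hs hend hk⟩⟩⟩

lemma DboxSet_eq_Dset {n i j ℓ : ℕ} (hi : i < n) (hj : j < n)
    (hℓ : ℓ ≤ (n - 1 - i) / q + (n - 1 - j) / p + 1) : DboxSet p q n ℓ i j = Dset p q ℓ i j :=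
  filter_congr fun _ hs => box_iff_nonneg hi hj hℓ hs

lemma Aboxpoly_eq_Apoly (a : ℤ → ℤ → ℂ) {n i j ℓ : ℕ} (hi : i < n) (hj : j < n)
    (hℓ : ℓ ≤ (n - 1 - i) / q + (n - 1 - j) / p + 1) :
    Aboxpoly p q a n ℓ i j = Apoly p q a ℓ i j :=
  sum_congr rfl fun _ hs => if_congr (box_iff_nonneg hi hj hℓ hs) rfl rfl

end Confinement

lemma gen_coeff (c : ℕ → ℂ) (ℓ : ℕ) : (gen c).coeff ((ℓ : ℤ) + 1) = c ℓ := by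
  rw [gen, HahnSeries.coeff_single_mul_add, one_mul, HahnSeries.ofPowerSeries_apply_coeff,
    PowerSeries.coeff_mk]

theorem truncated_resolvent_approximation_general
    (p q : ℕ) (a : ℤ → ℤ → ℂ) (n : ℕ)
    (i j : ℕ) (hi : i < n) (hj : j < n) :
    (∀ ℓ : ℕ, ℓ ≤ (n - 1 - i) / q + (n - 1 - j) / p + 1 →
      DboxSet p q n ℓ (i : ℤ) (j : ℤ) = Dset p q ℓ (i : ℤ) (j : ℤ)) ∧
    (∀ ℓ : ℕ, ℓ ≤ (n - 1 - i) / q + (n - 1 - j) / p + 1 →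
      Aboxpoly p q a n ℓ (i : ℤ) (j : ℤ) = Apoly p q a ℓ (i : ℤ) (j : ℤ)) ∧
    (∀ ℓ : ℕ, ℓ ≤ (n - 1 - i) / q + (n - 1 - j) / p + 1 →
      (Aser p q a (i : ℤ) (j : ℤ) -
          gen fun t => (Hnmat p q a n ^ t) ⟨i, hi⟩ ⟨j, hj⟩).coeff ((ℓ : ℤ) + 1) = 0) := by
  refine ⟨fun ℓ hℓ => DboxSet_eq_Dset hi hj hℓ, fun ℓ hℓ => Aboxpoly_eq_Apoly a hi hj hℓ,
    fun ℓ hℓ => ?_⟩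
  rw [HahnSeries.coeff_sub, Aser, gen_coeff, gen_coeff, Hnmat_pow_apply,
    Aboxpoly_eq_Apoly a hi hj hℓ, sub_self]

/-- **Theorem 7.2** (approximation): with `L = ⌊(n-1-i)/q⌋ + ⌊(n-1-j)/p⌋ + 1`, for all
`ℓ ≤ L` one has `D_{[ℓ,i,j,n]} = D_{[ℓ,i,j]}` and `A_{[ℓ,i,j,n]} = A_{[ℓ,i,j]}`; consequently
`A_{i,j}(z) - R_{i,j,n}(z) = O(z^{-L-2})`, i.e. the coefficients of `z^{-ℓ-1}` in `A_{i,j}(z)`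
and `R_{i,j,n}(z)` agree for all `0 ≤ ℓ ≤ L`. -/
theorem truncated_resolvent_approximation
    (p q : ℕ) (hp : 1 ≤ p) (hq : 1 ≤ q) (a : ℤ → ℤ → ℂ) (n : ℕ) (hn : 1 ≤ n)
    (i j : ℕ) (hi : i < n) (hj : j < n) :
    (∀ ℓ : ℕ, ℓ ≤ (n - 1 - i) / q + (n - 1 - j) / p + 1 →
      DboxSet p q n ℓ (i : ℤ) (j : ℤ) = Dset p q ℓ (i : ℤ) (j : ℤ)) ∧
    (∀ ℓ : ℕ, ℓ ≤ (n - 1 - i) / q + (n - 1 - j) / p + 1 →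
      Aboxpoly p q a n ℓ (i : ℤ) (j : ℤ) = Apoly p q a ℓ (i : ℤ) (j : ℤ)) ∧
    (∀ ℓ : ℕ, ℓ ≤ (n - 1 - i) / q + (n - 1 - j) / p + 1 →
      (Aser p q a (i : ℤ) (j : ℤ) -
          gen fun t => (Hnmat p q a n ^ t) ⟨i, hi⟩ ⟨j, hj⟩).coeff ((ℓ : ℤ) + 1) = 0) :=
  truncated_resolvent_approximation_general p q a n i j hi hj
end
end

section
/- Assume n ≥ max(p,q), and let R_n(z) be the q×p matrix with entries R_{i,j,n}(z) (0 ≤ i ≤ q−1, 0 ≤ j ≤ p−1). Then all the transformations below are defined and R_n(z) = (τ_{ρ,0} ∘ τ_{ρ,1} ∘ ⋯ ∘ τ_{ρ,n−1})(X_n(z)), where X_n(z) is the q×p matrix all of whose main-diagonal entries equal 1/z and all other entries equal 0. -/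
open scoped BigOperators
open Finset

noncomputable section

/-- The one-sided banded matrix `H`: `h_{i,j} = a_{min(i,j)}^{(j-i)}` when `-p ≤ j-i ≤ q`. -/
def Hmat (p q : ℕ) (a : ℤ → ℤ → ℂ) (i j : ℕ) : ℂ :=
  if -(p : ℤ) ≤ (j : ℤ) - (i : ℤ) ∧ (j : ℤ) - (i : ℤ) ≤ (q : ℤ) then
    a ((j : ℤ) - (i : ℤ)) (min (i : ℤ) (j : ℤ)) else 0

/-- Entrywise power of a one-sided matrix whose rows are supported on `[0, i + B]`:
`(M^n)_{i,j}`. -/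
def onePow (M : ℕ → ℕ → ℂ) (B : ℕ) : ℕ → ℕ → ℕ → ℂ
  | 0, i, j => if i = j then 1 else 0
  | n + 1, i, j => ∑ r ∈ Finset.range (i + B + 1), M i r * onePow M B n r j

/-- The transformation `T` on `q × p` matrices (over a field) with nonzero `(0,0)` entry. -/
def Tmat {F : Type*} [Field F] {q p : ℕ} (hq : 0 < q) (hp : 0 < p)
    (A : Matrix (Fin q) (Fin p) F) : Matrix (Fin q) (Fin p) F := fun i j =>
  if hi : (i : ℕ) + 1 < q then
    if hj : (j : ℕ) + 1 < p then
      (A ⟨(i : ℕ) + 1, hi⟩ ⟨(j : ℕ) + 1, hj⟩ * A ⟨0, hq⟩ ⟨0, hp⟩ -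
          A ⟨0, hq⟩ ⟨(j : ℕ) + 1, hj⟩ * A ⟨(i : ℕ) + 1, hi⟩ ⟨0, hp⟩) / A ⟨0, hq⟩ ⟨0, hp⟩
    else A ⟨(i : ℕ) + 1, hi⟩ ⟨0, hp⟩ / A ⟨0, hq⟩ ⟨0, hp⟩
  else
    if hj : (j : ℕ) + 1 < p then -A ⟨0, hq⟩ ⟨(j : ℕ) + 1, hj⟩ / A ⟨0, hq⟩ ⟨0, hp⟩
    else 1 / A ⟨0, hq⟩ ⟨0, hp⟩

/-- The inverse transformation `T⁻¹` on `q × p` matrices with nonzero `(q-1,p-1)` entry. -/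
def Tinv {F : Type*} [Field F] {q p : ℕ} (hq : 0 < q) (hp : 0 < p)
    (B : Matrix (Fin q) (Fin p) F) : Matrix (Fin q) (Fin p) F := fun i j =>
  if hi : (i : ℕ) = 0 then
    if hj : (j : ℕ) = 0 then
      1 / B ⟨q - 1, Nat.sub_lt hq one_pos⟩ ⟨p - 1, Nat.sub_lt hp one_pos⟩
    else
      -B ⟨q - 1, Nat.sub_lt hq one_pos⟩ ⟨(j : ℕ) - 1, by have := j.isLt; omega⟩ /
        B ⟨q - 1, Nat.sub_lt hq one_pos⟩ ⟨p - 1, Nat.sub_lt hp one_pos⟩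
  else
    if hj : (j : ℕ) = 0 then
      B ⟨(i : ℕ) - 1, by have := i.isLt; omega⟩ ⟨p - 1, Nat.sub_lt hp one_pos⟩ /
        B ⟨q - 1, Nat.sub_lt hq one_pos⟩ ⟨p - 1, Nat.sub_lt hp one_pos⟩
    else
      (B ⟨(i : ℕ) - 1, by have := i.isLt; omega⟩ ⟨(j : ℕ) - 1, by have := j.isLt; omega⟩ *
          B ⟨q - 1, Nat.sub_lt hq one_pos⟩ ⟨p - 1, Nat.sub_lt hp one_pos⟩ -
        B ⟨(i : ℕ) - 1, by have := i.isLt; omega⟩ ⟨p - 1, Nat.sub_lt hp one_pos⟩ *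
          B ⟨q - 1, Nat.sub_lt hq one_pos⟩ ⟨(j : ℕ) - 1, by have := j.isLt; omega⟩) /
        B ⟨q - 1, Nat.sub_lt hq one_pos⟩ ⟨p - 1, Nat.sub_lt hp one_pos⟩

/-- `chainFrom τ k X m = τ_m (τ_{m+1} ( ⋯ (τ_{k-1} X)))`; in particular
`chainFrom τ k X 0 = (τ_0 ∘ τ_1 ∘ ⋯ ∘ τ_{k-1}) X`. -/
def chainFrom {M : Type*} (τ : ℕ → M → M) (k : ℕ) (X : M) (m : ℕ) : M :=
  (List.range (k - m)).foldr (fun t Y => τ (m + t) Y) X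

/-- The `q × p` matrix `α_k(z)`, whose only nonzero entry is `z - a_k^{(0)}` at `(q-1, p-1)`. -/
def alphaZ (q p : ℕ) (a : ℤ → ℤ → ℂ) (k : ℕ) : Matrix (Fin q) (Fin p) LS := fun i j =>
  if (i : ℕ) = q - 1 ∧ (j : ℕ) = p - 1 then zLS - CLS (a 0 (k : ℤ)) else 0

/-- The `q × q` matrix `α_k⁺`: first `q-1` rows of the identity, last row
`(-a_k^{(1)}, …, -a_k^{(q)})`. -/
def alphaP (q : ℕ) (a : ℤ → ℤ → ℂ) (k : ℕ) : Matrix (Fin q) (Fin q) LS := fun i j =>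
  if (i : ℕ) = q - 1 then -CLS (a (((j : ℕ) : ℤ) + 1) (k : ℤ))
  else if i = j then 1 else 0

/-- The `p × p` matrix `α_k⁻`: first `p-1` columns of the identity, last column
`(a_k^{(-1)}, …, a_k^{(-p)})ᵀ`. -/
def alphaM (p : ℕ) (a : ℤ → ℤ → ℂ) (k : ℕ) : Matrix (Fin p) (Fin p) LS := fun i j =>
  if (j : ℕ) = p - 1 then CLS (a (-(((i : ℕ) : ℤ) + 1)) (k : ℤ))
  else if i = j then 1 else 0

/-- `F_r(z)`: the `q × p` matrix of resolvent series of `H^{[r]}` (delete the first `r` rows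
and columns of `H`); `F_0 = F`. -/
def Fmat (p q : ℕ) (a : ℤ → ℤ → ℂ) (r : ℕ) : Matrix (Fin q) (Fin p) LS := fun i j =>
  gen fun n => onePow (fun i' j' => Hmat p q a (i' + r) (j' + r)) q n (i : ℕ) (j : ℕ)

/-- The transformation `τ_{α,k}(X) = T⁻¹(α_k(z) + α_k⁺ X α_k⁻)`. -/
def tauAlpha (p q : ℕ) (hq : 0 < q) (hp : 0 < p) (a : ℤ → ℤ → ℂ) (k : ℕ)
    (X : Matrix (Fin q) (Fin p) LS) : Matrix (Fin q) (Fin p) LS :=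
  Tinv hq hp (alphaZ q p a k + alphaP q a k * X * alphaM p a k)

/-- The `q × q` matrix `ρ_k⁺` (depending on the truncation size `n`): identity except the last
row, `(-b_k^{(1)}, …, -b_k^{(q)})`, where `b_k^{(i)} = a_k^{(i)}` for `1 ≤ i ≤ n-k-1` and
`b_k^{(i)} = 0` for `n-k ≤ i ≤ q`. -/
def rhoP (q n : ℕ) (a : ℤ → ℤ → ℂ) (k : ℕ) : Matrix (Fin q) (Fin q) LS := fun i j =>
  if (i : ℕ) = q - 1 then
    -CLS (if (j : ℕ) + 1 ≤ n - k - 1 then a (((j : ℕ) : ℤ) + 1) (k : ℤ) else 0)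
  else if i = j then 1 else 0

/-- The `p × p` matrix `ρ_k⁻`: identity except the last column,
`(b_k^{(-1)}, …, b_k^{(-p)})ᵀ`, where `b_k^{(-j)} = a_k^{(-j)}` for `1 ≤ j ≤ n-k-1` and
`b_k^{(-j)} = 0` for `n-k ≤ j ≤ p`. -/
def rhoM (p n : ℕ) (a : ℤ → ℤ → ℂ) (k : ℕ) : Matrix (Fin p) (Fin p) LS := fun i j =>
  if (j : ℕ) = p - 1 then
    CLS (if (i : ℕ) + 1 ≤ n - k - 1 then a (-(((i : ℕ) : ℤ) + 1)) (k : ℤ) else 0)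
  else if i = j then 1 else 0

/-- The transformation `τ_{ρ,k}(X) = T⁻¹(ρ_k(z) + ρ_k⁺ X ρ_k⁻)` (note `ρ_k(z) = α_k(z)`). -/
def tauRho (p q n : ℕ) (hq : 0 < q) (hp : 0 < p) (a : ℤ → ℤ → ℂ) (k : ℕ)
    (X : Matrix (Fin q) (Fin p) LS) : Matrix (Fin q) (Fin p) LS :=
  Tinv hq hp (alphaZ q p a k + rhoP q n a k * X * rhoM p n a k)

/-- The `q × p` matrix `X_n(z)` with `1/z` on the main diagonal and zeros elsewhere. -/
def Xdiag (p q : ℕ) : Matrix (Fin q) (Fin p) LS := fun i j =>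
  if (i : ℕ) = (j : ℕ) then zLS⁻¹ else 0

/-!
`R_n(z)` is the resolvent `(z - H_n)⁻¹ = ∑ₗ H_nˡ z^{-ℓ-1}`. Let `R⁽ᵐ⁾` be the resolvent of the
principal block of `H_n` on the indices `m, …, n - 1`. Eliminating its first row and column
(a Schur complement) expresses `R⁽ᵐ⁾` through `R⁽ᵐ⁺¹⁾`: with `g = z - a_m^{(0)} - b R⁽ᵐ⁺¹⁾ c`,
where `b` and `c` are the first row and column of the block without their corner,
`g R⁽ᵐ⁾₀₀ = 1`, `g R⁽ᵐ⁾_{0,j+1} = (b R⁽ᵐ⁺¹⁾)_j`, `R⁽ᵐ⁾_{i+1,0} = (R⁽ᵐ⁺¹⁾ c)_i R⁽ᵐ⁾₀₀` and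
`R⁽ᵐ⁾_{i+1,j+1} = R⁽ᵐ⁺¹⁾_{ij} + (R⁽ᵐ⁺¹⁾ c)_i R⁽ᵐ⁾_{0,j+1}`.
These identities say exactly that `T(R⁽ᵐ⁾) = ρ_m(z) + ρ_m⁺ R⁽ᵐ⁺¹⁾ ρ_m⁻`: since `H` is banded,
`b` and `c` are the truncated rows `b_m^{(±i)}` that make up `ρ_m^±`. Hence
`R⁽ᵐ⁾ = τ_{ρ,m}(R⁽ᵐ⁺¹⁾)`, and the corner of `T(R⁽ᵐ⁾)` is `1 / R⁽ᵐ⁾₀₀ = g ≠ 0`.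
All these matrices are compared through their `q × p` corners, padded by the entries of `X_n(z)`
outside the range of `R⁽ᵐ⁾`: the padded `R⁽ⁿ⁾` is `X_n(z)`, and since `n ≥ max(p, q)` the padded
`R⁽⁰⁾` is `R_n(z)`.
-/

open Matrix

lemma gen_add (c d : ℕ → ℂ) : gen (c + d) = gen c + gen d := by
  have : PowerSeries.mk (c + d) = PowerSeries.mk c + PowerSeries.mk d := by ext; simp
  rw [gen, this, map_add, mul_add]
  rfl

lemma gen_zero : gen 0 = 0 := by
  have : PowerSeries.mk (0 : ℕ → ℂ) = 0 := by ext; simp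
  rw [gen, this, map_zero, mul_zero]

def genAddHom : (ℕ → ℂ) →+ LS where
  toFun := gen
  map_zero' := gen_zero
  map_add' := gen_add

lemma gen_sum {ι : Type*} (s : Finset ι) (f : ι → ℕ → ℂ) :
    gen (fun ℓ => ∑ i ∈ s, f i ℓ) = ∑ i ∈ s, gen (f i) := by
  have h : (fun ℓ => ∑ i ∈ s, f i ℓ) = ∑ i ∈ s, f i := by ext; simp [Finset.sum_apply]
  rw [h]
  exact map_sum genAddHom f s

lemma CLS_mul_gen (r : ℂ) (c : ℕ → ℂ) : CLS r * gen c = gen fun ℓ => r * c ℓ := by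
  have : PowerSeries.mk (fun ℓ => r * c ℓ) = PowerSeries.C r * PowerSeries.mk c := by
    ext; simp
  rw [gen, gen, this, map_mul (HahnSeries.ofPowerSeries ℤ ℂ), HahnSeries.ofPowerSeries_C, CLS]
  ring

lemma zLS_mul_gen (c : ℕ → ℂ) : zLS * gen c = CLS (c 0) + gen fun ℓ => c (ℓ + 1) := by
  have : PowerSeries.mk c =
      PowerSeries.C (c 0) + PowerSeries.X * PowerSeries.mk (fun ℓ => c (ℓ + 1)) := by
    ext (_ | _) <;> simp [PowerSeries.coeff_succ_X_mul]
  rw [gen, gen, ← mul_assoc, zLS, HahnSeries.single_mul_single, neg_add_cancel, mul_one,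
    HahnSeries.single_zero_one, one_mul, this, map_add, map_mul (HahnSeries.ofPowerSeries ℤ ℂ),
    HahnSeries.ofPowerSeries_C, HahnSeries.ofPowerSeries_X, CLS]

-- `neg_mul` does not unify on `LS` (elaboration times out); the sign is moved termwise by `ring`.
lemma sum_neg_mul_LS {ι : Type*} (s : Finset ι) (f g : ι → LS) :
    ∑ i ∈ s, -f i * g i = -∑ i ∈ s, f i * g i := by
  rw [← Finset.sum_neg_distrib]
  exact Finset.sum_congr rfl fun _ _ => by ring

lemma Fin.sum_univ_eq_sum_univ_of_agree {M : Type*} [AddCommMonoid M] {p s : ℕ}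
    (f : Fin p → M) (g : Fin s → M) (hfg : ∀ (x : Fin p) (y : Fin s), (x : ℕ) = y → f x = g y)
    (hf : ∀ x : Fin p, s ≤ x → f x = 0) (hg : ∀ y : Fin s, p ≤ y → g y = 0) :
    ∑ x, f x = ∑ y, g y := by
  refine Finset.sum_bij_ne_zero
    (fun x _ hx => ⟨x, by_contra fun h => hx (hf x (not_lt.1 h))⟩) (by simp)
    (fun _ _ _ _ _ _ h => Fin.ext (Fin.mk.inj h)) ?_ (fun x _ _ => hfg x _ rfl)
  intro y _ hy
  refine ⟨⟨y, by_contra fun h => hy (hg y (not_lt.1 h))⟩, Finset.mem_univ _, ?_, rfl⟩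
  rwa [hfg _ y rfl]

def resolventLS {ι : Type*} [Fintype ι] [DecidableEq ι] (K : Matrix ι ι ℂ) : Matrix ι ι LS :=
  Matrix.of fun i j => gen fun ℓ => (K ^ ℓ) i j

section Resolvent

variable {ι : Type*} [Fintype ι] [DecidableEq ι] (K : Matrix ι ι ℂ)

lemma zLS_smul_sub_mul_resolventLS : (zLS • 1 - K.map CLS) * resolventLS K = 1 := by
  refine Matrix.ext fun i j => ?_
  have hpow : ∀ ℓ, (K ^ (ℓ + 1)) i j = ∑ k, K i k * (K ^ ℓ) k j := fun ℓ => by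
    rw [pow_succ', Matrix.mul_apply]
  have hK : (K.map CLS * resolventLS K) i j = gen fun ℓ => (K ^ (ℓ + 1)) i j := by
    simp only [Matrix.mul_apply, Matrix.map_apply, resolventLS, Matrix.of_apply, CLS_mul_gen,
      ← gen_sum, hpow]
  have hz : (zLS • (1 : Matrix ι ι LS) * resolventLS K) i j = zLS * resolventLS K i j := by
    simp [Matrix.mul_apply, Matrix.one_apply]
  rw [Matrix.sub_mul, Matrix.sub_apply, hK, hz, resolventLS, Matrix.of_apply, zLS_mul_gen,
    add_sub_cancel_right, pow_zero, Matrix.one_apply, Matrix.one_apply]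
  split_ifs <;> simp [CLS]

lemma resolventLS_mul_zLS_smul_sub : resolventLS K * (zLS • 1 - K.map CLS) = 1 :=
  mul_eq_one_comm.mp (zLS_smul_sub_mul_resolventLS K)

end Resolvent

section Schur

variable {s : ℕ} (K : Matrix (Fin (s + 1)) (Fin (s + 1)) ℂ)

def schurCol : Fin s → LS :=
  resolventLS (K.submatrix Fin.succ Fin.succ) *ᵥ fun t => CLS (K t.succ 0)

def schurRow : Fin s → LS :=
  (fun t => CLS (K 0 t.succ)) ᵥ* resolventLS (K.submatrix Fin.succ Fin.succ)

def schurComplement : LS :=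
  zLS - CLS (K 0 0) - (fun t => CLS (K 0 t.succ)) ⬝ᵥ schurCol K

/-- Rows `1, …, s` of `(z - K) R = 1`, solved with the resolvent of the lower block. -/
lemma resolventLS_succ_row (i : Fin s) :
    resolventLS K i.succ =
      Fin.cons 0 (resolventLS (K.submatrix Fin.succ Fin.succ) i) +
        schurCol K i • resolventLS K 0 := by
  set R := resolventLS K
  set R' := resolventLS (K.submatrix Fin.succ Fin.succ)
  funext j
  have hcol : (zLS • 1 - (K.submatrix Fin.succ Fin.succ).map CLS) *ᵥ (fun t => R t.succ j) =
      (fun t => (1 : Matrix (Fin (s + 1)) (Fin (s + 1)) LS) t.succ j) +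
        R 0 j • fun t => CLS (K t.succ 0) := by
    funext t
    have h := congrFun (congrFun (zLS_smul_sub_mul_resolventLS K) t.succ) j
    rw [Matrix.mul_apply, Fin.sum_univ_succ] at h
    simp [Matrix.mulVec, dotProduct, Matrix.one_apply] at h ⊢
    linear_combination h
  have hR := congrArg (R' *ᵥ ·) hcol
  simp only [Matrix.mulVec_mulVec, R', resolventLS_mul_zLS_smul_sub, Matrix.one_mulVec,
    Matrix.mulVec_add, Matrix.mulVec_smul] at hR
  rw [congrFun hR i]
  cases j using Fin.cases with
  | zero => simp [schurCol, R', mul_comm, Matrix.mulVec, dotProduct]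
  | succ j => simp [schurCol, R', mul_comm, Matrix.one_apply, Matrix.mulVec, dotProduct]

/-- Row `0` of `(z - K) R = 1`, after substituting `resolventLS_succ_row`. -/
lemma schurComplement_smul_resolventLS_zero_row :
    schurComplement K • resolventLS K 0 = Fin.cons 1 (schurRow K) := by
  set R' := resolventLS (K.submatrix Fin.succ Fin.succ)
  funext j
  have hterm : ∀ x : Fin s, (zLS • 1 - K.map CLS) 0 x.succ * resolventLS K x.succ j =
      -(CLS (K 0 x.succ) * (Fin.cons 0 (R' x) : Fin (s + 1) → LS) j) -
        CLS (K 0 x.succ) * schurCol K x * resolventLS K 0 j := by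
    intro x
    simp [resolventLS_succ_row, Matrix.one_apply_ne (Fin.succ_ne_zero x).symm, R']
    ring
  have h := congrFun (congrFun (zLS_smul_sub_mul_resolventLS K) 0) j
  rw [Matrix.mul_apply, Fin.sum_univ_succ, Finset.sum_congr rfl fun x _ => hterm x,
    Finset.sum_sub_distrib, Finset.sum_neg_distrib, ← Finset.sum_mul] at h
  simp only [Matrix.sub_apply, Matrix.smul_apply, Matrix.one_apply_eq, Matrix.map_apply,
    smul_eq_mul, mul_one] at h
  simp only [Pi.smul_apply, smul_eq_mul, schurComplement, dotProduct]
  cases j using Fin.cases with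
  | zero =>
    simp only [Fin.cons_zero, mul_zero, Finset.sum_const_zero, neg_zero,
      Matrix.one_apply_eq] at h ⊢
    linear_combination h
  | succ j =>
    simp only [Fin.cons_succ, Matrix.one_apply_ne (Fin.succ_ne_zero _).symm] at h ⊢
    simp only [schurRow, Matrix.vecMul, dotProduct]
    linear_combination h

lemma resolventLS_succ_zero (i : Fin s) :
    resolventLS K i.succ 0 = schurCol K i * resolventLS K 0 0 := by
  simpa using congrFun (resolventLS_succ_row K i) 0

lemma resolventLS_succ_succ (i j : Fin s) :
    resolventLS K i.succ j.succ =
      resolventLS (K.submatrix Fin.succ Fin.succ) i j + schurCol K i * resolventLS K 0 j.succ := by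
  simpa using congrFun (resolventLS_succ_row K i) j.succ

lemma schurComplement_mul_resolventLS_zero_zero : schurComplement K * resolventLS K 0 0 = 1 := by
  simpa using congrFun (schurComplement_smul_resolventLS_zero_row K) 0

lemma schurComplement_mul_resolventLS_zero_succ (j : Fin s) :
    schurComplement K * resolventLS K 0 j.succ = schurRow K j := by
  simpa using congrFun (schurComplement_smul_resolventLS_zero_row K) j.succ

lemma resolventLS_zero_zero_ne_zero : resolventLS K 0 0 ≠ 0 :=
  right_ne_zero_of_mul_eq_one (schurComplement_mul_resolventLS_zero_zero K)

end Schur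

section TransformT

variable {F : Type*} [Field F] {q p : ℕ} (hq : 0 < q) (hp : 0 < p)

lemma Tmat_last_last (A : Matrix (Fin q) (Fin p) F) :
    Tmat hq hp A ⟨q - 1, Nat.sub_lt hq one_pos⟩ ⟨p - 1, Nat.sub_lt hp one_pos⟩ =
      1 / A ⟨0, hq⟩ ⟨0, hp⟩ := by
  simp only [Tmat, show ¬(q - 1 + 1 < q) by omega, show ¬(p - 1 + 1 < p) by omega, dite_false]

lemma Tmat_apply_of_lt (A : Matrix (Fin q) (Fin p) F) (i j : ℕ) (hi : i + 1 < q)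
    (hj : j + 1 < p) :
    Tmat hq hp A ⟨i, by omega⟩ ⟨j, by omega⟩ =
      (A ⟨i + 1, hi⟩ ⟨j + 1, hj⟩ * A ⟨0, hq⟩ ⟨0, hp⟩ -
          A ⟨0, hq⟩ ⟨j + 1, hj⟩ * A ⟨i + 1, hi⟩ ⟨0, hp⟩) / A ⟨0, hq⟩ ⟨0, hp⟩ := by
  simp only [Tmat, hi, hj, dite_true]

lemma Tinv_Tmat (A : Matrix (Fin q) (Fin p) F) (hA : A ⟨0, hq⟩ ⟨0, hp⟩ ≠ 0) :
    Tinv hq hp (Tmat hq hp A) = A := by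
  ext ⟨i, hi⟩ ⟨j, hj⟩
  have hq' : ¬(q - 1 + 1 < q) := by omega
  have hp' : ¬(p - 1 + 1 < p) := by omega
  rcases i with _ | i <;> rcases j with _ | j <;>
    simp [Tinv, Tmat, hq', hp', hi, hj] <;> field_simp
  ring

end TransformT

def truncation (N : ℕ → ℕ → ℂ) (s : ℕ) : Matrix (Fin s) (Fin s) ℂ := Matrix.of fun i j => N i j

def paddedResolvent (p q s : ℕ) (N : ℕ → ℕ → ℂ) : Matrix (Fin q) (Fin p) LS :=
  Matrix.of fun i j =>
    if h : (i : ℕ) < s ∧ (j : ℕ) < s then resolventLS (truncation N s) ⟨i, h.1⟩ ⟨j, h.2⟩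
    else if (i : ℕ) = j then zLS⁻¹ else 0

section Padded

variable {p q s : ℕ} (N : ℕ → ℕ → ℂ)

lemma truncation_submatrix_succ :
    (truncation N (s + 1)).submatrix Fin.succ Fin.succ =
      truncation (fun i j => N (i + 1) (j + 1)) s :=
  rfl

lemma paddedResolvent_apply_of_lt (i : Fin q) (j : Fin p) (hi : (i : ℕ) < s)
    (hj : (j : ℕ) < s) :
    paddedResolvent p q s N i j = resolventLS (truncation N s) ⟨i, hi⟩ ⟨j, hj⟩ := by
  simp [paddedResolvent, hi, hj]

lemma paddedResolvent_apply_of_not_lt (i : Fin q) (j : Fin p)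
    (h : ¬((i : ℕ) < s ∧ (j : ℕ) < s)) :
    paddedResolvent p q s N i j = if (i : ℕ) = j then zLS⁻¹ else 0 := by
  simp only [paddedResolvent, Matrix.of_apply, dif_neg h]

lemma paddedResolvent_zero : paddedResolvent p q 0 N = Xdiag p q := by
  ext1 i j
  simp [paddedResolvent, Xdiag]

end Padded

section PaddedSchur

variable {p q s : ℕ} (hp : 0 < p) (hq : 0 < q) (N : ℕ → ℕ → ℂ)

lemma paddedResolvent_succ_zero_zero :
    paddedResolvent p q (s + 1) N ⟨0, hq⟩ ⟨0, hp⟩ = resolventLS (truncation N (s + 1)) 0 0 :=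
  paddedResolvent_apply_of_lt _ _ _ (Nat.succ_pos s) (Nat.succ_pos s)

lemma paddedResolvent_succ_zero_zero_ne_zero :
    paddedResolvent p q (s + 1) N ⟨0, hq⟩ ⟨0, hp⟩ ≠ 0 := by
  rw [paddedResolvent_succ_zero_zero]
  exact resolventLS_zero_zero_ne_zero _

lemma Tmat_paddedResolvent_succ_apply_of_lt (i j : ℕ) (hi : i + 1 < q) (hj : j + 1 < p) :
    Tmat hq hp (paddedResolvent p q (s + 1) N) ⟨i, by omega⟩ ⟨j, by omega⟩ =
      paddedResolvent p q s (fun i j => N (i + 1) (j + 1)) ⟨i, by omega⟩ ⟨j, by omega⟩ := by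
  have hr := resolventLS_zero_zero_ne_zero (truncation N (s + 1))
  rw [Tmat_apply_of_lt hq hp _ i j hi hj, paddedResolvent_succ_zero_zero]
  by_cases hij : i < s ∧ j < s
  · obtain ⟨his, hjs⟩ := hij
    rw [paddedResolvent_apply_of_lt _ ⟨i + 1, hi⟩ ⟨j + 1, hj⟩ (by simp; omega) (by simp; omega),
      paddedResolvent_apply_of_lt _ ⟨0, hq⟩ ⟨j + 1, hj⟩ (by simp) (by simp; omega),
      paddedResolvent_apply_of_lt _ ⟨i + 1, hi⟩ ⟨0, hp⟩ (by simp; omega) (by simp),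
      paddedResolvent_apply_of_lt _ ⟨i, _⟩ ⟨j, _⟩ his hjs]
    have e1 := resolventLS_succ_succ (truncation N (s + 1)) ⟨i, his⟩ ⟨j, hjs⟩
    have e2 := resolventLS_succ_zero (truncation N (s + 1)) ⟨i, his⟩
    simp only [Fin.succ_mk, truncation_submatrix_succ, Fin.zero_eta] at e1 e2 ⊢
    rw [e1, e2]
    field_simp
    ring
  · rw [paddedResolvent_apply_of_not_lt _ ⟨i + 1, hi⟩ ⟨j + 1, hj⟩ (by simp; omega),
      paddedResolvent_apply_of_not_lt _ ⟨i, _⟩ ⟨j, _⟩ hij]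
    -- outside the resolvent block, the rank-one correction of `T` vanishes
    have hprod : paddedResolvent p q (s + 1) N ⟨0, hq⟩ ⟨j + 1, hj⟩ *
        paddedResolvent p q (s + 1) N ⟨i + 1, hi⟩ ⟨0, hp⟩ = 0 := by
      rcases not_and_or.1 hij with h | h
      · rw [paddedResolvent_apply_of_not_lt _ ⟨i + 1, hi⟩ ⟨0, hp⟩ (by simp; omega),
          if_neg (by simp), mul_zero]
      · rw [paddedResolvent_apply_of_not_lt _ ⟨0, hq⟩ ⟨j + 1, hj⟩ (by simp; omega),
          if_neg (by simp), zero_mul]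
    rw [hprod, sub_zero, mul_div_cancel_right₀ _ hr]
    simp

lemma Tmat_paddedResolvent_succ_apply_last_col (i : ℕ) (hi : i + 1 < q) :
    Tmat hq hp (paddedResolvent p q (s + 1) N) ⟨i, by omega⟩ ⟨p - 1, Nat.sub_lt hp one_pos⟩ =
      if h : i < s then schurCol (truncation N (s + 1)) ⟨i, h⟩ else 0 := by
  have hr := resolventLS_zero_zero_ne_zero (truncation N (s + 1))
  simp only [Tmat, dif_pos hi, show ¬(p - 1 + 1 < p) by omega, dite_false]
  rw [paddedResolvent_succ_zero_zero]
  by_cases his : i < s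
  · rw [dif_pos his,
      paddedResolvent_apply_of_lt _ ⟨i + 1, hi⟩ ⟨0, hp⟩ (by simp; omega) (by simp)]
    have e := resolventLS_succ_zero (truncation N (s + 1)) ⟨i, his⟩
    simp only [Fin.succ_mk, Fin.zero_eta] at e ⊢
    rw [e, mul_div_cancel_right₀ _ hr]
  · rw [dif_neg his, paddedResolvent_apply_of_not_lt _ ⟨i + 1, hi⟩ ⟨0, hp⟩ (by simp; omega),
      if_neg (by simp), zero_div]

lemma Tmat_paddedResolvent_succ_apply_last_row (j : ℕ) (hj : j + 1 < p) :
    Tmat hq hp (paddedResolvent p q (s + 1) N) ⟨q - 1, Nat.sub_lt hq one_pos⟩ ⟨j, by omega⟩ =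
      -if h : j < s then schurRow (truncation N (s + 1)) ⟨j, h⟩ else 0 := by
  have hr := resolventLS_zero_zero_ne_zero (truncation N (s + 1))
  simp only [Tmat, show ¬(q - 1 + 1 < q) by omega, dif_pos hj, dite_false]
  rw [paddedResolvent_succ_zero_zero]
  by_cases hjs : j < s
  · rw [dif_pos hjs,
      paddedResolvent_apply_of_lt _ ⟨0, hq⟩ ⟨j + 1, hj⟩ (by simp) (by simp; omega)]
    have e := schurComplement_mul_resolventLS_zero_succ (truncation N (s + 1)) ⟨j, hjs⟩
    have e0 := schurComplement_mul_resolventLS_zero_zero (truncation N (s + 1))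
    simp only [Fin.succ_mk, Fin.zero_eta] at e ⊢
    rw [← e]
    field_simp
    linear_combination (resolventLS (truncation N (s + 1)) 0 ⟨j + 1, by omega⟩) * e0
  · rw [dif_neg hjs, paddedResolvent_apply_of_not_lt _ ⟨0, hq⟩ ⟨j + 1, hj⟩ (by simp; omega),
      if_neg (by simp), neg_zero, zero_div]

lemma Tmat_paddedResolvent_succ_last_last :
    Tmat hq hp (paddedResolvent p q (s + 1) N)
        ⟨q - 1, Nat.sub_lt hq one_pos⟩ ⟨p - 1, Nat.sub_lt hp one_pos⟩ =
      schurComplement (truncation N (s + 1)) := by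
  rw [Tmat_last_last, paddedResolvent_succ_zero_zero,
    ← eq_one_div_of_mul_eq_one_left (schurComplement_mul_resolventLS_zero_zero _)]

end PaddedSchur

section Rho

variable {p q n : ℕ} (a : ℤ → ℤ → ℂ) (m : ℕ)

lemma rhoP_mul_apply_of_ne {ι : Type*} (X : Matrix (Fin q) ι LS) (i : Fin q)
    (hi : (i : ℕ) ≠ q - 1) (j : ι) : (rhoP q n a m * X) i j = X i j := by
  simp [Matrix.mul_apply, rhoP, hi]

lemma mul_rhoM_apply_of_ne {ι : Type*} [Fintype ι] (X : Matrix ι (Fin p) LS) (i : ι)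
    (j : Fin p) (hj : (j : ℕ) ≠ p - 1) : (X * rhoM p n a m) i j = X i j := by
  simp [Matrix.mul_apply, rhoM, hj]

lemma alphaZ_apply_of_ne (i : Fin q) (j : Fin p) (h : (i : ℕ) ≠ q - 1 ∨ (j : ℕ) ≠ p - 1) :
    alphaZ q p a m i j = 0 := by
  rw [alphaZ, if_neg (by tauto)]

end Rho

section Step

variable {p q n s : ℕ} (a : ℤ → ℤ → ℂ) (m : ℕ) (N : ℕ → ℕ → ℂ)

lemma paddedResolvent_mul_rhoM_apply_last (hp : 0 < p) (hs : n - m - 1 = s)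
    (hcol : ∀ t : ℕ, N (t + 1) 0 = if t + 1 ≤ p then a (-((t : ℤ) + 1)) m else 0) (i : Fin q) :
    (paddedResolvent p q s (fun i j => N (i + 1) (j + 1)) * rhoM p n a m) i
        ⟨p - 1, Nat.sub_lt hp one_pos⟩ =
      if h : (i : ℕ) < s then schurCol (truncation N (s + 1)) ⟨i, h⟩ else 0 := by
  have hM : ∀ x : Fin p, rhoM p n a m x ⟨p - 1, Nat.sub_lt hp one_pos⟩ =
      CLS (if (x : ℕ) + 1 ≤ s then a (-((x : ℤ) + 1)) m else 0) := fun x => by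
    simp [rhoM, hs]
  simp only [Matrix.mul_apply, hM]
  split_ifs with hi
  · simp only [schurCol, Matrix.mulVec, dotProduct, truncation_submatrix_succ]
    refine Fin.sum_univ_eq_sum_univ_of_agree _ _ (fun x y hxy => ?_) (fun x hx => ?_)
      (fun y hy => ?_)
    · have hx : (x : ℕ) < s := hxy ▸ y.2
      rw [paddedResolvent_apply_of_lt _ _ _ hi hx, if_pos (by omega : (x : ℕ) + 1 ≤ s),
        show (⟨x, hx⟩ : Fin s) = y from Fin.ext hxy]
      simp [truncation, hcol, hxy, show (y : ℕ) + 1 ≤ p by omega]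
    · rw [if_neg (by omega)]
      simp [CLS]
    · simp [truncation, hcol, show ¬((y : ℕ) + 1 ≤ p) by omega, CLS]
  · refine Finset.sum_eq_zero fun x _ => ?_
    rw [paddedResolvent_apply_of_not_lt _ _ _ (fun h => hi h.1)]
    split_ifs with hix hxs <;> simp [CLS]
    omega

lemma rhoP_mul_paddedResolvent_apply_last (hq : 0 < q) (hs : n - m - 1 = s)
    (hrow : ∀ t : ℕ, N 0 (t + 1) = if t + 1 ≤ q then a ((t : ℤ) + 1) m else 0) (j : Fin p) :
    (rhoP q n a m * paddedResolvent p q s (fun i j => N (i + 1) (j + 1)))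
        ⟨q - 1, Nat.sub_lt hq one_pos⟩ j =
      -if h : (j : ℕ) < s then schurRow (truncation N (s + 1)) ⟨j, h⟩ else 0 := by
  have hP : ∀ t : Fin q, rhoP q n a m ⟨q - 1, Nat.sub_lt hq one_pos⟩ t =
      -CLS (if (t : ℕ) + 1 ≤ s then a ((t : ℤ) + 1) m else 0) := fun t => by
    simp [rhoP, hs]
  simp only [Matrix.mul_apply, hP, sum_neg_mul_LS]
  congr 1
  split_ifs with hj
  · simp only [schurRow, Matrix.vecMul, dotProduct, truncation_submatrix_succ]
    refine Fin.sum_univ_eq_sum_univ_of_agree _ _ (fun t y hty => ?_) (fun t ht => ?_)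
      (fun y hy => ?_)
    · have ht : (t : ℕ) < s := hty ▸ y.2
      rw [paddedResolvent_apply_of_lt _ _ _ ht hj, if_pos (by omega : (t : ℕ) + 1 ≤ s),
        show (⟨t, ht⟩ : Fin s) = y from Fin.ext hty]
      simp [truncation, hrow, hty, show (y : ℕ) + 1 ≤ q by omega]
    · rw [if_neg (by omega)]
      simp [CLS]
    · simp [truncation, hrow, show ¬((y : ℕ) + 1 ≤ q) by omega, CLS]
  · refine Finset.sum_eq_zero fun t _ => ?_
    rw [paddedResolvent_apply_of_not_lt _ _ _ (fun h => hj h.2)]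
    split_ifs with htj hts <;> simp [CLS]
    omega

lemma rhoP_mul_paddedResolvent_mul_rhoM_last_last (hp : 0 < p) (hq : 0 < q)
    (hs : n - m - 1 = s)
    (hrow : ∀ t : ℕ, N 0 (t + 1) = if t + 1 ≤ q then a ((t : ℤ) + 1) m else 0)
    (hcol : ∀ t : ℕ, N (t + 1) 0 = if t + 1 ≤ p then a (-((t : ℤ) + 1)) m else 0) :
    (rhoP q n a m * paddedResolvent p q s (fun i j => N (i + 1) (j + 1)) * rhoM p n a m)
        ⟨q - 1, Nat.sub_lt hq one_pos⟩ ⟨p - 1, Nat.sub_lt hp one_pos⟩ =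
      -((fun t => CLS (truncation N (s + 1) 0 t.succ)) ⬝ᵥ schurCol (truncation N (s + 1))) := by
  have hP : ∀ t : Fin q, rhoP q n a m ⟨q - 1, Nat.sub_lt hq one_pos⟩ t =
      -CLS (if (t : ℕ) + 1 ≤ s then a ((t : ℤ) + 1) m else 0) := fun t => by
    simp [rhoP, hs]
  rw [Matrix.mul_assoc, Matrix.mul_apply]
  simp only [paddedResolvent_mul_rhoM_apply_last a m N hp hs hcol, hP, sum_neg_mul_LS,
    dotProduct]
  congr 1
  refine Fin.sum_univ_eq_sum_univ_of_agree _ _ (fun t y hty => ?_) (fun t ht => ?_)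
    (fun y hy => ?_)
  · have ht : (t : ℕ) < s := hty ▸ y.2
    rw [dif_pos ht, if_pos (by omega : (t : ℕ) + 1 ≤ s),
      show (⟨t, ht⟩ : Fin s) = y from Fin.ext hty]
    simp [truncation, hrow, hty, show (y : ℕ) + 1 ≤ q by omega]
  · rw [dif_neg (by omega), mul_zero]
  · simp [truncation, hrow, show ¬((y : ℕ) + 1 ≤ q) by omega, CLS]

theorem Tmat_paddedResolvent_succ (hp : 0 < p) (hq : 0 < q) (hs : n - m - 1 = s)
    (h00 : N 0 0 = a 0 m)
    (hrow : ∀ t : ℕ, N 0 (t + 1) = if t + 1 ≤ q then a ((t : ℤ) + 1) m else 0)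
    (hcol : ∀ t : ℕ, N (t + 1) 0 = if t + 1 ≤ p then a (-((t : ℤ) + 1)) m else 0) :
    Tmat hq hp (paddedResolvent p q (s + 1) N) =
      alphaZ q p a m +
        rhoP q n a m * paddedResolvent p q s (fun i j => N (i + 1) (j + 1)) * rhoM p n a m := by
  refine Matrix.ext fun ⟨i, hi⟩ ⟨j, hj⟩ => ?_
  rw [Matrix.add_apply]
  by_cases hi' : i + 1 < q <;> by_cases hj' : j + 1 < p
  · rw [Tmat_paddedResolvent_succ_apply_of_lt hp hq N i j hi' hj',
      alphaZ_apply_of_ne _ _ _ _ (Or.inl (by simp; omega)), zero_add,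
      mul_rhoM_apply_of_ne _ _ _ _ _ (by simp; omega),
      rhoP_mul_apply_of_ne _ _ _ _ (by simp; omega)]
  · obtain rfl : j = p - 1 := by omega
    rw [Tmat_paddedResolvent_succ_apply_last_col hp hq N i hi',
      alphaZ_apply_of_ne _ _ _ _ (Or.inl (by simp; omega)), zero_add, Matrix.mul_assoc,
      rhoP_mul_apply_of_ne _ _ _ _ (by simp; omega),
      paddedResolvent_mul_rhoM_apply_last a m N hp hs hcol]
  · obtain rfl : i = q - 1 := by omega
    rw [Tmat_paddedResolvent_succ_apply_last_row hp hq N j hj',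
      alphaZ_apply_of_ne _ _ _ _ (Or.inr (by simp; omega)), zero_add,
      mul_rhoM_apply_of_ne _ _ _ _ _ (by simp; omega),
      rhoP_mul_paddedResolvent_apply_last a m N hq hs hrow]
  · obtain rfl : i = q - 1 := by omega
    obtain rfl : j = p - 1 := by omega
    rw [Tmat_paddedResolvent_succ_last_last hp hq N,
      rhoP_mul_paddedResolvent_mul_rhoM_last_last a m N hp hq hs hrow hcol]
    simp only [alphaZ, and_self, ↓reduceIte, schurComplement, truncation, Matrix.of_apply]
    rw [Fin.val_zero, h00]
    ring

end Step

def Hshift (p q : ℕ) (a : ℤ → ℤ → ℂ) (m : ℕ) : ℕ → ℕ → ℂ :=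
  fun i j => Hmat p q a (i + m) (j + m)

section Hshift

variable (p q : ℕ) (a : ℤ → ℤ → ℂ) (m : ℕ)

lemma Hshift_zero_zero : Hshift p q a m 0 0 = a 0 m := by
  simp [Hshift, Hmat]

lemma Hshift_zero_succ (t : ℕ) :
    Hshift p q a m 0 (t + 1) = if t + 1 ≤ q then a ((t : ℤ) + 1) m else 0 := by
  simp only [Hshift, Hmat]
  by_cases ht : t + 1 ≤ q
  · rw [if_pos (by omega), if_pos ht]
    congr 1 <;> omega
  · rw [if_neg (by omega), if_neg ht]

lemma Hshift_succ_zero (t : ℕ) :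
    Hshift p q a m (t + 1) 0 = if t + 1 ≤ p then a (-((t : ℤ) + 1)) m else 0 := by
  simp only [Hshift, Hmat]
  by_cases ht : t + 1 ≤ p
  · rw [if_pos (by omega), if_pos ht]
    congr 1 <;> omega
  · rw [if_neg (by omega), if_neg ht]

lemma Hshift_succ : (fun i j => Hshift p q a m (i + 1) (j + 1)) = Hshift p q a (m + 1) := by
  funext i j
  simp only [Hshift]
  congr 1 <;> omega

end Hshift

lemma chainFrom_self {M : Type*} (τ : ℕ → M → M) (k : ℕ) (X : M) : chainFrom τ k X k = X := by
  simp [chainFrom]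

lemma chainFrom_of_lt {M : Type*} (τ : ℕ → M → M) {k m : ℕ} (X : M) (h : m < k) :
    chainFrom τ k X m = τ m (chainFrom τ k X (m + 1)) := by
  rw [chainFrom, chainFrom, show k - m = k - (m + 1) + 1 by omega, List.range_succ_eq_map,
    List.foldr_cons, List.foldr_map, Nat.add_zero]
  congr 2
  funext t Y
  congr 1
  omega

section Chain

variable {p q n : ℕ} (hp : 0 < p) (hq : 0 < q) (a : ℤ → ℤ → ℂ)

lemma Tmat_paddedResolvent_Hshift {m : ℕ} (hm : m < n) :
    Tmat hq hp (paddedResolvent p q (n - m) (Hshift p q a m)) =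
      alphaZ q p a m +
        rhoP q n a m * paddedResolvent p q (n - (m + 1)) (Hshift p q a (m + 1)) *
          rhoM p n a m := by
  rw [← Hshift_succ, show n - m = n - (m + 1) + 1 by omega]
  exact Tmat_paddedResolvent_succ a m _ hp hq (by omega) (Hshift_zero_zero p q a m)
    (Hshift_zero_succ p q a m) (Hshift_succ_zero p q a m)

lemma chainFrom_tauRho_eq_paddedResolvent {m : ℕ} (hm : m ≤ n) :
    chainFrom (tauRho p q n hq hp a) n (Xdiag p q) m =
      paddedResolvent p q (n - m) (Hshift p q a m) := by
  induction hm using Nat.decreasingInduction with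
  | self => rw [chainFrom_self, Nat.sub_self, paddedResolvent_zero]
  | of_succ m hm ih =>
    rw [chainFrom_of_lt _ _ hm, ih, tauRho, ← Tmat_paddedResolvent_Hshift hp hq a hm]
    refine Tinv_Tmat hq hp _ ?_
    rw [show n - m = n - (m + 1) + 1 by omega]
    exact paddedResolvent_succ_zero_zero_ne_zero hp hq _

end Chain

/-- **Proposition 7.3** (finite matrix continued fraction for `R_n(z)`): for `n ≥ max(p,q)`,
all the transformations are defined and
`R_n(z) = (τ_{ρ,0} ∘ τ_{ρ,1} ∘ ⋯ ∘ τ_{ρ,n-1})(X_n(z))`. -/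
theorem matrix_continued_fraction_for_Rn
    (p q : ℕ) (hp : 0 < p) (hq : 0 < q) (a : ℤ → ℤ → ℂ) (n : ℕ) (hn : max p q ≤ n) :
    (∀ m < n,
      (alphaZ q p a m +
          rhoP q n a m * chainFrom (tauRho p q n hq hp a) n (Xdiag p q) (m + 1) *
            rhoM p n a m)
          ⟨q - 1, Nat.sub_lt hq one_pos⟩ ⟨p - 1, Nat.sub_lt hp one_pos⟩ ≠ 0) ∧
    (Matrix.of fun (i : Fin q) (j : Fin p) =>
        gen fun ℓ =>
          (Hnmat p q a n ^ ℓ)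
            ⟨(i : ℕ), lt_of_lt_of_le i.isLt (le_trans (le_max_right p q) hn)⟩
            ⟨(j : ℕ), lt_of_lt_of_le j.isLt (le_trans (le_max_left p q) hn)⟩) =
      chainFrom (tauRho p q n hq hp a) n (Xdiag p q) 0 := by
  refine ⟨fun m hm => ?_, ?_⟩
  · rw [chainFrom_tauRho_eq_paddedResolvent hp hq a hm,
      ← Tmat_paddedResolvent_Hshift hp hq a hm, show n - m = n - (m + 1) + 1 by omega,
      Tmat_last_last]
    exact one_div_ne_zero (paddedResolvent_succ_zero_zero_ne_zero hp hq _)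
  · rw [chainFrom_tauRho_eq_paddedResolvent hp hq a (Nat.zero_le n)]
    refine Matrix.ext fun i j => ?_
    rw [paddedResolvent_apply_of_lt _ _ _ (by omega) (by omega)]
    rfl
end
end
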